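/- Let T be a densely defined closed antilinear operator from H to K with Moore–Penrose inverse T† (defined as the inverse of T restricted to N(T)^⊥ ∩ D(T) on R(T), and 0 on R(T)^⊥). Then (T^♯)† = (T†)^♯. -/

import Mathlib

open Classical
noncomputable section

variable {H K : Type*}
  [NormedAddCommGroup H] [InnerProductSpace ℂ H] [CompleteSpace H]
  [NormedAddCommGroup K] [InnerProductSpace ℂ K] [CompleteSpace K]

/-- `D` is a complex linear subspace of `H` (as a set). -/
def IsLinSubspace (D : Set H) : Prop :=
  (0 : H) ∈ D ∧ ∀ (a : ℂ) (x y : H), x ∈ D → y ∈ D → a • x + y ∈ D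

/-- `f` is (complex) linear on `D`. -/
def LinearOn (D : Set H) (f : H → K) : Prop :=
  ∀ (a : ℂ) (x y : H), x ∈ D → y ∈ D → f (a • x + y) = a • f x + f y

/-- `f` is antilinear (conjugate-linear) on `D`. -/
def AntilinearOn (D : Set H) (f : H → K) : Prop :=
  ∀ (a : ℂ) (x y : H), x ∈ D → y ∈ D → f (a • x + y) = (starRingEnd ℂ a) • f x + f y

/-- The operator with domain `D` given by `f` has closed graph, i.e. is a closed operator. -/
def HasClosedGraph (D : Set H) (f : H → K) : Prop :=
  IsClosed {p : H × K | p.1 ∈ D ∧ f p.1 = p.2}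

/-- `C` is a conjugation on `K`: an isometric antilinear involution. -/
def IsConjugation (C : K → K) : Prop :=
  (∀ (a : ℂ) (x y : K), C (a • x + y) = (starRingEnd ℂ a) • C x + C y) ∧
  (∀ x, C (C x) = x) ∧
  ∀ x y : K, (inner ℂ (C x) (C y) : ℂ) = inner ℂ y x

/-- Domain of the (linear) Hilbert space adjoint of the operator `(D, f)`. -/
def adjDom (D : Set H) (f : H → K) : Set K :=
  {y | ∃ u : H, ∀ x ∈ D, (inner ℂ (f x) y : ℂ) = inner ℂ x u}

/-- The (linear) Hilbert space adjoint of the operator `(D, f)`; `0` outside its domain.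
For a densely defined operator the vector `u` below is unique. -/
def adjFun (D : Set H) (f : H → K) : K → H := fun y =>
  if h : ∃ u : H, ∀ x ∈ D, (inner ℂ (f x) y : ℂ) = inner ℂ x u then h.choose else 0

/-- Domain of the antilinear adjoint `T^♯` of the operator `(D, f)`:
`y ∈ D(T^♯)` iff there is `u` with `conj ⟪f x, y⟫ = ⟪x, u⟫` for all `x ∈ D`. -/
def sharpDom (D : Set H) (f : H → K) : Set K :=
  {y | ∃ u : H, ∀ x ∈ D, (starRingEnd ℂ) (inner ℂ (f x) y : ℂ) = inner ℂ x u}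

/-- The antilinear adjoint `T^♯`; `0` outside its domain.
For a densely defined operator the vector `u` below is unique. -/
def sharpFun (D : Set H) (f : H → K) : K → H := fun y =>
  if h : ∃ u : H, ∀ x ∈ D, (starRingEnd ℂ) (inner ℂ (f x) y : ℂ) = inner ℂ x u then h.choose
  else 0

/-- Orthogonal complement (as a set) of a set. -/
def perpSet (S : Set K) : Set K := {y | ∀ z ∈ S, (inner ℂ z y : ℂ) = 0}


/-- The orthogonal complement of the kernel `N(T)` of the operator `T = (D, f)`. -/
def nullPerp (D : Set H) (f : H → K) : Set H := perpSet {x : H | x ∈ D ∧ f x = 0}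

/-- Domain `R(T) ⊕ R(T)^⊥` of the Moore–Penrose inverse of `T = (D, f)`. -/
def pinvDom (D : Set H) (f : H → K) : Set K :=
  {y : K | ∃ r ∈ f '' D, ∃ p ∈ perpSet (f '' D), y = r + p}

/-- The Moore–Penrose inverse of `T = (D, f)`: for `y = y₁ + y₂` with `y₁ ∈ R(T)` and
`y₂ ∈ R(T)^⊥`, it is the unique `x ∈ N(T)^⊥ ∩ D(T)` with `f x = y₁` (and it is `0` outside
`R(T) ⊕ R(T)^⊥`; such an `x` is unique for a closed operator). -/
def pinvFun (D : Set H) (f : H → K) : K → H := fun y =>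
  if h : ∃ x, x ∈ D ∧ x ∈ nullPerp D f ∧ f x - y ∈ perpSet (f '' D) then h.choose else 0

open scoped ComplexInnerProductSpace

/-!
A vector `w` is `(T^♯)† u` iff `w ∈ D(T^♯)`, `w ⊥ N(T^♯) = R(T)^⊥` and `T^♯ w - u ⊥ R(T^♯)`;
it is `(T†)^♯ u` iff `conj ⟪T† y, u⟫ = ⟪y, w⟫` for all `y ∈ R(T) ⊕ R(T)^⊥`. These two conditions
are equivalent. Testing the second one at `y ∈ R(T)^⊥` (where `T† y = 0`) and at `y = T x`
(where `T† y` is the component of `x` in `N(T)^⊥`) shows that `T^♯ w` is the component of `u` in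
`N(T)^⊥`, which gives the first. Conversely, the first gives the second as soon as
`T^♯ w - u ∈ N(T)`; this is von Neumann's `R(T^♯)^⊥ ⊆ N(T)` for closed `T`, obtained from
`G^⊥⊥ = G` for the graph `G` of `T`, a closed real subspace of `H × K`. As `R(T) ⊕ R(T)^⊥` is dense,
`(T†)^♯ u` is determined by this condition.
-/

lemma isClosed_ker_of_hasClosedGraph {E F : Type*} [NormedAddCommGroup E] [NormedAddCommGroup F]
    {D : Set E} {f : E → F} (hclosed : HasClosedGraph D f) :
    IsClosed {x | x ∈ D ∧ f x = 0} :=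
  hclosed.preimage (continuous_id.prodMk continuous_const)

section

variable {E F : Type*} [NormedAddCommGroup E] [InnerProductSpace ℂ E]
  [NormedAddCommGroup F] [InnerProductSpace ℂ F] {D : Set E} {f : E → F}

lemma IsLinSubspace.add_mem (hD : IsLinSubspace D) {x y : E} (hx : x ∈ D) (hy : y ∈ D) :
    x + y ∈ D := by
  simpa using hD.2 1 x y hx hy

lemma IsLinSubspace.smul_mem (hD : IsLinSubspace D) (a : ℂ) {x : E} (hx : x ∈ D) :
    a • x ∈ D := by
  simpa using hD.2 a x 0 hx hD.1

lemma IsLinSubspace.sub_mem (hD : IsLinSubspace D) {x y : E} (hx : x ∈ D) (hy : y ∈ D) :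
    x - y ∈ D := by
  simpa [neg_add_eq_sub] using hD.2 (-1) y x hy hx

lemma AntilinearOn.map_zero (hD : IsLinSubspace D) (hf : AntilinearOn D f) : f 0 = 0 := by
  simpa using hf 1 0 0 hD.1 hD.1

lemma AntilinearOn.map_add (hf : AntilinearOn D f) {x y : E} (hx : x ∈ D) (hy : y ∈ D) :
    f (x + y) = f x + f y := by
  simpa using hf 1 x y hx hy

lemma AntilinearOn.map_smul (hD : IsLinSubspace D) (hf : AntilinearOn D f) (a : ℂ) {x : E}
    (hx : x ∈ D) : f (a • x) = starRingEnd ℂ a • f x := by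
  simpa [hf.map_zero hD] using hf a x 0 hx hD.1

lemma AntilinearOn.map_sub (hf : AntilinearOn D f) {x y : E} (hx : x ∈ D) (hy : y ∈ D) :
    f (x - y) = f x - f y := by
  simpa [neg_add_eq_sub] using hf (-1) y x hy hx

def kerSubmodule (hD : IsLinSubspace D) (hf : AntilinearOn D f) : Submodule ℂ E where
  carrier := {x | x ∈ D ∧ f x = 0}
  add_mem' hx hy := ⟨hD.add_mem hx.1 hy.1, by rw [hf.map_add hx.1 hy.1, hx.2, hy.2, add_zero]⟩
  zero_mem' := ⟨hD.1, hf.map_zero hD⟩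
  smul_mem' a _ hx := ⟨hD.smul_mem a hx.1, by rw [hf.map_smul hD a hx.1, hx.2, smul_zero]⟩

def rangeSubmodule (hD : IsLinSubspace D) (hf : AntilinearOn D f) : Submodule ℂ F where
  carrier := f '' D
  add_mem' := by
    rintro _ _ ⟨x, hx, rfl⟩ ⟨y, hy, rfl⟩
    exact ⟨x + y, hD.add_mem hx hy, hf.map_add hx hy⟩
  zero_mem' := ⟨0, hD.1, hf.map_zero hD⟩
  smul_mem' := by
    rintro a _ ⟨x, hx, rfl⟩
    exact ⟨starRingEnd ℂ a • x, hD.smul_mem _ hx, by rw [hf.map_smul hD _ hx, Complex.conj_conj]⟩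

lemma zero_mem_perpSet (S : Set F) : (0 : F) ∈ perpSet S := fun z _ ↦ inner_zero_right z

lemma neg_mem_perpSet {S : Set F} {y : F} (hy : y ∈ perpSet S) : -y ∈ perpSet S := fun z hz ↦ by
  rw [inner_neg_right, hy z hz, neg_zero]

lemma sub_mem_perpSet {S : Set F} {y y' : F} (hy : y ∈ perpSet S) (hy' : y' ∈ perpSet S) :
    y - y' ∈ perpSet S := fun z hz ↦ by
  rw [inner_sub_right, hy z hz, hy' z hz, sub_zero]

lemma isClosed_perpSet (S : Set F) : IsClosed (perpSet S) := by
  have hS : perpSet S = ⋂ z ∈ S, {y : F | ⟪z, y⟫ = 0} := by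
    ext y; simp [perpSet]
  rw [hS]
  exact isClosed_biInter fun z _ ↦ isClosed_eq (continuous_const.inner continuous_id)
    continuous_const

lemma eq_zero_of_mem_of_mem_perpSet {S : Set F} {y : F} (hy : y ∈ S) (hy' : y ∈ perpSet S) :
    y = 0 :=
  inner_self_eq_zero.mp (hy' y hy)

lemma inner_eq_of_sub_mem_of_mem_perpSet {S : Set F} {y y' z : F} (hy : y - y' ∈ S)
    (hz : z ∈ perpSet S) : ⟪y, z⟫ = ⟪y', z⟫ := by
  rw [← sub_eq_zero, ← inner_sub_left, hz _ hy]

lemma Submodule.exists_sub_mem_perpSet [CompleteSpace E] (N : Submodule ℂ E)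
    (hN : IsClosed (N : Set E)) (x : E) : ∃ n ∈ N, x - n ∈ perpSet (N : Set E) := by
  have : CompleteSpace N := hN.completeSpace_coe
  exact ⟨N.starProjection x, N.starProjection_apply_mem x, N.sub_starProjection_mem_orthogonal x⟩

-- `u` is a possible value of `T^♯ y`; `sharpFun` picks one.
def IsSharpValue (D : Set E) (f : E → F) (y : F) (u : E) : Prop :=
  ∀ x ∈ D, starRingEnd ℂ ⟪f x, y⟫ = ⟪x, u⟫

lemma isSharpValue_sharpFun {y : F} (hy : y ∈ sharpDom D f) :
    IsSharpValue D f y (sharpFun D f y) := by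
  have hex : ∃ u, ∀ x ∈ D, starRingEnd ℂ ⟪f x, y⟫ = ⟪x, u⟫ := hy
  rw [sharpFun, dif_pos hex]
  exact hex.choose_spec

lemma IsSharpValue.sharpFun_eq (hd : Dense D) {y : F} {u : E} (h : IsSharpValue D f y u) :
    sharpFun D f y = u :=
  hd.eq_of_inner_right ℂ fun x hx ↦ by rw [← isSharpValue_sharpFun ⟨u, h⟩ x hx, h x hx]

lemma isLinSubspace_sharpDom : IsLinSubspace (sharpDom D f) := by
  refine ⟨⟨0, fun x _ ↦ by simp⟩, fun a y z ⟨u, hu⟩ ⟨v, hv⟩ ↦ ⟨starRingEnd ℂ a • u + v, ?_⟩⟩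
  intro x hx
  simp [hu x hx, hv x hx]

lemma antilinearOn_sharpFun (hd : Dense D) : AntilinearOn (sharpDom D f) (sharpFun D f) := by
  intro a y z hy hz
  refine IsSharpValue.sharpFun_eq hd fun x hx ↦ ?_
  simp [isSharpValue_sharpFun hy x hx, isSharpValue_sharpFun hz x hx]

lemma mem_ker_sharp_iff (hd : Dense D) {w : F} :
    (w ∈ sharpDom D f ∧ sharpFun D f w = 0) ↔ w ∈ perpSet (f '' D) := by
  have hzero : IsSharpValue D f w 0 ↔ w ∈ perpSet (f '' D) := by
    simp only [IsSharpValue, perpSet, inner_zero_right, map_eq_zero, Set.forall_mem_image,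
      Set.mem_ofPred_eq]
  refine ⟨fun ⟨hw, hw0⟩ ↦ hzero.1 (hw0 ▸ isSharpValue_sharpFun hw), fun h ↦ ?_⟩
  exact ⟨⟨0, hzero.2 h⟩, (hzero.2 h).sharpFun_eq hd⟩

lemma isClosed_ker_sharp (hd : Dense D) :
    IsClosed {w | w ∈ sharpDom D f ∧ sharpFun D f w = 0} := by
  rw [Set.ext fun w ↦ mem_ker_sharp_iff hd]
  exact isClosed_perpSet (f '' D)

lemma mem_perpSet_range_sharp_of_mem_ker {q : E} (hq : q ∈ D ∧ f q = 0) :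
    q ∈ perpSet (sharpFun D f '' sharpDom D f) := by
  rintro _ ⟨w, hw, rfl⟩
  rw [← inner_conj_symm, ← isSharpValue_sharpFun hw q hq.1, hq.2, inner_zero_left, map_zero,
    map_zero]

-- `x` is a possible value of `T† y`; `pinvFun` picks one.
def IsPinvValue (D : Set E) (f : E → F) (y : F) (x : E) : Prop :=
  x ∈ D ∧ x ∈ nullPerp D f ∧ f x - y ∈ perpSet (f '' D)

lemma IsPinvValue.unique (hD : IsLinSubspace D) (hf : AntilinearOn D f) {y : F} {x₁ x₂ : E}
    (h₁ : IsPinvValue D f y x₁) (h₂ : IsPinvValue D f y x₂) : x₁ = x₂ := by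
  have hfsub : f (x₁ - x₂) ∈ perpSet (f '' D) := by
    rw [hf.map_sub h₁.1 h₂.1, ← sub_sub_sub_cancel_right (f x₁) (f x₂) y]
    exact sub_mem_perpSet h₁.2.2 h₂.2.2
  have hker : x₁ - x₂ ∈ D ∧ f (x₁ - x₂) = 0 :=
    ⟨hD.sub_mem h₁.1 h₂.1,
      eq_zero_of_mem_of_mem_perpSet (Set.mem_image_of_mem f (hD.sub_mem h₁.1 h₂.1)) hfsub⟩
  exact sub_eq_zero.mp (eq_zero_of_mem_of_mem_perpSet hker (sub_mem_perpSet h₁.2.1 h₂.2.1))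

lemma isPinvValue_pinvFun {y : F} (hy : ∃ x, IsPinvValue D f y x) :
    IsPinvValue D f y (pinvFun D f y) := by
  have hex : ∃ x, x ∈ D ∧ x ∈ nullPerp D f ∧ f x - y ∈ perpSet (f '' D) := hy
  rw [pinvFun, dif_pos hex]
  exact hex.choose_spec

lemma IsPinvValue.pinvFun_eq (hD : IsLinSubspace D) (hf : AntilinearOn D f) {y : F} {x : E}
    (h : IsPinvValue D f y x) : pinvFun D f y = x :=
  (isPinvValue_pinvFun ⟨x, h⟩).unique hD hf h

lemma mem_pinvDom_iff [CompleteSpace E] (hD : IsLinSubspace D) (hf : AntilinearOn D f)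
    (hker : IsClosed {x | x ∈ D ∧ f x = 0}) {y : F} :
    y ∈ pinvDom D f ↔ ∃ x, IsPinvValue D f y x := by
  constructor
  · rintro ⟨_, ⟨x, hx, rfl⟩, p, hp, rfl⟩
    obtain ⟨n, hn, hxn⟩ := (kerSubmodule hD hf).exists_sub_mem_perpSet hker x
    refine ⟨x - n, hD.sub_mem hx hn.1, hxn, ?_⟩
    rw [hf.map_sub hx hn.1, hn.2, sub_zero, sub_add_cancel_left]
    exact neg_mem_perpSet hp
  · rintro ⟨x, hx, -, hxy⟩
    exact ⟨f x, ⟨x, hx, rfl⟩, -(f x - y), neg_mem_perpSet hxy, by abel⟩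

lemma isPinvValue_apply_sub (hD : IsLinSubspace D) (hf : AntilinearOn D f) {x n : E} (hx : x ∈ D)
    (hn : n ∈ D ∧ f n = 0) (hxn : x - n ∈ nullPerp D f) : IsPinvValue D f (f x) (x - n) := by
  refine ⟨hD.sub_mem hx hn.1, hxn, ?_⟩
  rw [hf.map_sub hx hn.1, hn.2, sub_zero, sub_self]
  exact zero_mem_perpSet _

lemma isPinvValue_zero (hD : IsLinSubspace D) (hf : AntilinearOn D f) {z : F}
    (hz : z ∈ perpSet (f '' D)) : IsPinvValue D f z 0 := by
  refine ⟨hD.1, zero_mem_perpSet _, ?_⟩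
  rw [hf.map_zero hD, zero_sub]
  exact neg_mem_perpSet hz

lemma dense_pinvDom [CompleteSpace F] (hD : IsLinSubspace D) (hf : AntilinearOn D f) :
    Dense (pinvDom D f) := by
  set R := rangeSubmodule hD hf
  have hR : pinvDom D f = (R ⊔ Rᗮ : Submodule ℂ F) := Set.ext fun y ↦ by
    rw [SetLike.mem_coe, Submodule.mem_sup]
    exact ⟨fun ⟨r, hr, p, hp, h⟩ ↦ ⟨r, hr, p, hp, h.symm⟩,
      fun ⟨r, hr, p, hp, h⟩ ↦ ⟨r, hr, p, hp, h.symm⟩⟩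
  rw [hR, Submodule.dense_iff_topologicalClosure_eq_top, Submodule.topologicalClosure_eq_top_iff,
    ← Submodule.inf_orthogonal]
  exact Rᗮ.inf_orthogonal_eq_bot

lemma isSharpValue_neg_of_re_inner_add_re_inner_eq_zero (hD : IsLinSubspace D)
    (hf : AntilinearOn D f) {a : E} {b : F}
    (h : ∀ x ∈ D, (⟪x, a⟫).re + (⟪f x, b⟫).re = 0) : IsSharpValue D f b (-a) := by
  intro x hx
  -- testing at `x` and at `I • x` gives the real and the imaginary parts
  have hre := h x hx
  have him := h _ (hD.smul_mem Complex.I hx)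
  rw [hf.map_smul hD _ hx, inner_smul_left, inner_smul_left] at him
  rw [inner_neg_right]
  apply Complex.ext <;> simp [-inner_conj_symm] at hre him ⊢ <;> linarith

section

-- The graph of an antilinear operator is only a real subspace of `E × F`.
attribute [local instance] InnerProductSpace.complexToReal

def realGraph (hD : IsLinSubspace D) (hf : AntilinearOn D f) :
    Submodule ℝ (WithLp 2 (E × F)) where
  carrier := {p | p.fst ∈ D ∧ f p.fst = p.snd}
  add_mem' hp hr := by
    rw [Set.mem_ofPred_eq, WithLp.add_fst, WithLp.add_snd, hf.map_add hp.1 hr.1, hp.2, hr.2]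
    exact ⟨hD.add_mem hp.1 hr.1, rfl⟩
  zero_mem' := by
    rw [Set.mem_ofPred_eq, WithLp.zero_fst, WithLp.zero_snd]
    exact ⟨hD.1, hf.map_zero hD⟩
  smul_mem' r p hp := by
    rw [Set.mem_ofPred_eq, WithLp.smul_fst, WithLp.smul_snd, ← Complex.coe_smul,
      ← Complex.coe_smul, hf.map_smul hD _ hp.1, Complex.conj_ofReal, hp.2]
    exact ⟨hD.smul_mem _ hp.1, rfl⟩

lemma isClosed_realGraph (hD : IsLinSubspace D) (hf : AntilinearOn D f)
    (hclosed : HasClosedGraph D f) : IsClosed (realGraph hD hf : Set (WithLp 2 (E × F))) :=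
  hclosed.preimage (WithLp.prod_continuous_ofLp 2 E F)

lemma isSharpValue_of_mem_orthogonal_realGraph (hD : IsLinSubspace D) (hf : AntilinearOn D f)
    {v : WithLp 2 (E × F)} (hv : v ∈ (realGraph hD hf)ᗮ) : IsSharpValue D f v.snd (-v.fst) := by
  refine isSharpValue_neg_of_re_inner_add_re_inner_eq_zero hD hf fun x hx ↦ ?_
  have hgraph : WithLp.toLp 2 (x, f x) ∈ realGraph hD hf := ⟨hx, rfl⟩
  have horth := (Submodule.mem_orthogonal _ v).1 hv _ hgraph
  rwa [WithLp.prod_inner_apply] at horth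

lemma mem_ker_of_mem_perpSet_range_sharp [CompleteSpace E] [CompleteSpace F]
    (hD : IsLinSubspace D) (hf : AntilinearOn D f) (hdense : Dense D)
    (hclosed : HasClosedGraph D f) {q : E} (hq : q ∈ perpSet (sharpFun D f '' sharpDom D f)) :
    q ∈ D ∧ f q = 0 := by
  set G := realGraph hD hf
  have : CompleteSpace G := (isClosed_realGraph hD hf hclosed).completeSpace_coe
  suffices WithLp.toLp 2 (q, (0 : F)) ∈ Gᗮᗮ by
    rw [G.orthogonal_orthogonal] at this
    exact this
  refine (Submodule.mem_orthogonal _ _).2 fun v hv ↦ ?_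
  have hsharp := isSharpValue_of_mem_orthogonal_realGraph hD hf hv
  have hq0 : ⟪-v.fst, q⟫ = 0 := by
    rw [← hsharp.sharpFun_eq hdense]
    exact hq _ ⟨v.snd, ⟨_, hsharp⟩, rfl⟩
  rw [inner_neg_left, neg_eq_zero] at hq0
  rw [WithLp.prod_inner_apply, WithLp.ofLp_toLp, inner_zero_right, add_zero]
  exact congrArg Complex.re hq0

end

lemma IsPinvValue.isSharpValue_pinv [CompleteSpace E] [CompleteSpace F] (hD : IsLinSubspace D)
    (hf : AntilinearOn D f) (hdense : Dense D) (hclosed : HasClosedGraph D f) {u : E} {w : F}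
    (h : IsPinvValue (sharpDom D f) (sharpFun D f) u w) :
    IsSharpValue (pinvDom D f) (pinvFun D f) u w := by
  obtain ⟨hw, hwn, hwu⟩ := h
  have hker : sharpFun D f w - u ∈ {x | x ∈ D ∧ f x = 0} :=
    mem_ker_of_mem_perpSet_range_sharp hD hf hdense hclosed hwu
  intro y hy
  obtain ⟨hx, hxn, hxy⟩ := isPinvValue_pinvFun
    ((mem_pinvDom_iff hD hf (isClosed_ker_of_hasClosedGraph hclosed)).1 hy)
  set x := pinvFun D f y
  calc starRingEnd ℂ ⟪x, u⟫ = ⟪u, x⟫ := inner_conj_symm _ _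
    _ = ⟪sharpFun D f w, x⟫ := (inner_eq_of_sub_mem_of_mem_perpSet hker hxn).symm
    _ = starRingEnd ℂ (starRingEnd ℂ ⟪f x, w⟫) := by
      rw [isSharpValue_sharpFun hw x hx, inner_conj_symm]
    _ = ⟪f x, w⟫ := Complex.conj_conj _
    _ = ⟪y, w⟫ := inner_eq_of_sub_mem_of_mem_perpSet ((mem_ker_sharp_iff hdense).2 hxy) hwn

lemma IsSharpValue.isSharpValue_sub_of_pinv [CompleteSpace E] (hD : IsLinSubspace D)
    (hf : AntilinearOn D f) (hclosed : HasClosedGraph D f) {u n : E} {w : F}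
    (h : IsSharpValue (pinvDom D f) (pinvFun D f) u w) (hn : n ∈ D ∧ f n = 0)
    (hun : u - n ∈ nullPerp D f) : IsSharpValue D f w (u - n) := by
  intro x hx
  obtain ⟨m, hm, hxm⟩ :=
    (kerSubmodule hD hf).exists_sub_mem_perpSet (isClosed_ker_of_hasClosedGraph hclosed) x
  have hpinv : pinvFun D f (f x) = x - m :=
    (isPinvValue_apply_sub hD hf hx hm hxm).pinvFun_eq hD hf
  have hfx : f x ∈ pinvDom D f := ⟨f x, ⟨x, hx, rfl⟩, 0, zero_mem_perpSet _, (add_zero _).symm⟩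
  calc starRingEnd ℂ ⟪f x, w⟫ = ⟪x - m, u⟫ := by rw [← h (f x) hfx, hpinv, Complex.conj_conj]
    _ = ⟪x - m, u - n⟫ := by
      rw [inner_sub_right, inner_eq_zero_symm.1 (hxm n hn), sub_zero]
    _ = ⟪x, u - n⟫ :=
      (inner_eq_of_sub_mem_of_mem_perpSet (by rwa [sub_sub_cancel]) hun).symm

lemma IsSharpValue.isPinvValue_sharp [CompleteSpace E] (hD : IsLinSubspace D)
    (hf : AntilinearOn D f) (hdense : Dense D) (hclosed : HasClosedGraph D f) {u : E} {w : F}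
    (h : IsSharpValue (pinvDom D f) (pinvFun D f) u w) :
    IsPinvValue (sharpDom D f) (sharpFun D f) u w := by
  obtain ⟨n, hn, hun⟩ :=
    (kerSubmodule hD hf).exists_sub_mem_perpSet (isClosed_ker_of_hasClosedGraph hclosed) u
  have hsharp := h.isSharpValue_sub_of_pinv hD hf hclosed hn hun
  refine ⟨⟨_, hsharp⟩, fun z hz ↦ ?_, ?_⟩
  · have hz' := (mem_ker_sharp_iff hdense).1 hz
    have hzw := h z ⟨0, ⟨0, hD.1, hf.map_zero hD⟩, z, hz', (zero_add z).symm⟩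
    rwa [(isPinvValue_zero hD hf hz').pinvFun_eq hD hf, inner_zero_left, map_zero, eq_comm] at hzw
  · rw [hsharp.sharpFun_eq hdense, sub_sub_cancel_left]
    exact neg_mem_perpSet (mem_perpSet_range_sharp_of_mem_ker hn)

lemma isPinvValue_sharp_iff_isSharpValue_pinv [CompleteSpace E] [CompleteSpace F]
    (hD : IsLinSubspace D) (hf : AntilinearOn D f) (hdense : Dense D)
    (hclosed : HasClosedGraph D f) {u : E} {w : F} :
    IsPinvValue (sharpDom D f) (sharpFun D f) u w ↔ IsSharpValue (pinvDom D f) (pinvFun D f) u w :=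
  ⟨IsPinvValue.isSharpValue_pinv hD hf hdense hclosed,
    IsSharpValue.isPinvValue_sharp hD hf hdense hclosed⟩

end

/-- For a densely defined closed antilinear operator `T = (D, f)` from `H`
to `K`, the Moore–Penrose inverse of `T^♯` equals the antilinear adjoint of `T†`:
`(T^♯)† = (T†)^♯`. -/
theorem pinv_sharp_eq_sharp_pinv
    (D : Set H) (f : H → K)
    (hsub : IsLinSubspace D) (hanti : AntilinearOn D f) (hdense : Dense D)
    (hclosed : HasClosedGraph D f) :
    pinvDom (sharpDom D f) (sharpFun D f) = sharpDom (pinvDom D f) (pinvFun D f) ∧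
    ∀ x ∈ pinvDom (sharpDom D f) (sharpFun D f),
      pinvFun (sharpDom D f) (sharpFun D f) x
        = sharpFun (pinvDom D f) (pinvFun D f) x := by
  have hkey (u : H) (w : K) := isPinvValue_sharp_iff_isSharpValue_pinv hsub hanti hdense hclosed
    (u := u) (w := w)
  have hpinvDom (u : H) := mem_pinvDom_iff (y := u) (isLinSubspace_sharpDom (D := D) (f := f))
    (antilinearOn_sharpFun hdense) (isClosed_ker_sharp hdense)
  refine ⟨Set.ext fun u ↦ (hpinvDom u).trans (exists_congr (hkey u)), fun u hu ↦ ?_⟩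
  have hpinv := isPinvValue_pinvFun ((hpinvDom u).1 hu)
  exact (((hkey u _).1 hpinv).sharpFun_eq (dense_pinvDom hsub hanti)).symm
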